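/- For all α ∈ [0,2]: T(α) ≥ (90+19α)·2/(α+9), where T(α) = (90+19α)·Γ(α/2+2)·Γ(α+9/2) / (Γ(α/2+11/2)·Γ(α+2)). -/

import Mathlib

/-! Since `Γ(α/2 + 11/2) = (α + 9)/2 · Γ(α/2 + 9/2)`, the claim says that
`Γ(α + 2) Γ(α/2 + 9/2) ≤ Γ(α/2 + 2) Γ(α + 9/2)`. Both pairs of arguments have the same sum and the
left pair lies between the right one, so this follows from the log-convexity of `Γ` on `(0, ∞)`. -/

open Real Set

theorem ConvexOn.map_add_map_le_map_add_map {𝕜 E β : Type*} [Semiring 𝕜] [PartialOrder 𝕜]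
    [AddCommMonoid E] [AddCommMonoid β] [PartialOrder β] [IsOrderedAddMonoid β]
    [Module 𝕜 E] [Module 𝕜 β] {s : Set E} {f : E → β} (hf : ConvexOn 𝕜 s f)
    {a b : E} (ha : a ∈ s) (hb : b ∈ s) {t u : 𝕜} (ht : 0 ≤ t) (hu : 0 ≤ u) (htu : t + u = 1) :
    f (t • a + u • b) + f (u • a + t • b) ≤ f a + f b :=
  calc f (t • a + u • b) + f (u • a + t • b)
      ≤ (t • f a + u • f b) + (u • f a + t • f b) :=
        add_le_add (hf.2 ha hb ht hu htu) (hf.2 ha hb hu ht (by rwa [add_comm]))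
    _ = f a + f b := by
        rw [add_add_add_comm, ← add_smul, ← add_smul, add_comm u t, htu, one_smul, one_smul]

theorem ConvexOn.map_add_map_le_of_add_eq {𝕜 β : Type*} [Field 𝕜] [LinearOrder 𝕜]
    [IsStrictOrderedRing 𝕜] [AddCommMonoid β] [PartialOrder β] [IsOrderedAddMonoid β]
    [Module 𝕜 β] {s : Set 𝕜} {f : 𝕜 → β} (hf : ConvexOn 𝕜 s f) {a b x y : 𝕜}
    (ha : a ∈ s) (hb : b ∈ s) (hax : a ≤ x) (hxb : x ≤ b) (hxy : x + y = a + b) :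
    f x + f y ≤ f a + f b := by
  obtain rfl | hab := (hax.trans hxb).eq_or_lt
  · obtain rfl : x = a := le_antisymm hxb hax
    obtain rfl : y = x := by linarith
    rfl
  have hnonneg {z w : 𝕜} (h : z ≤ w) : 0 ≤ (w - z) / (b - a) :=
    div_nonneg (sub_nonneg.2 h) (sub_pos.2 hab).le
  have key := hf.map_add_map_le_map_add_map ha hb (hnonneg hxb) (hnonneg hax) (by field_simp; ring)
  have hx : ((b - x) / (b - a)) • a + ((x - a) / (b - a)) • b = x := by
    simp only [smul_eq_mul]
    field_simp
    ring
  have hy : ((x - a) / (b - a)) • a + ((b - x) / (b - a)) • b = y := by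
    simp only [smul_eq_mul]
    field_simp
    linear_combination -(b - a) * hxy
  rwa [hx, hy] at key

theorem Real.Gamma_mul_Gamma_le_of_add_eq {a b x y : ℝ} (ha : 0 < a) (hax : a ≤ x) (hxb : x ≤ b)
    (hxy : x + y = a + b) : Gamma x * Gamma y ≤ Gamma a * Gamma b := by
  have hy : a ≤ y := by linarith
  have hlog := convexOn_log_Gamma.map_add_map_le_of_add_eq (mem_Ioi.2 ha)
    (mem_Ioi.2 (ha.trans_le (hax.trans hxb))) hax hxb hxy
  simp only [Function.comp_apply] at hlog
  have hΓ {z : ℝ} (hz : a ≤ z) : 0 < Gamma z := Gamma_pos_of_pos (ha.trans_le hz)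
  rwa [← log_mul (hΓ hax).ne' (hΓ hy).ne', ← log_mul (hΓ le_rfl).ne' (hΓ (hax.trans hxb)).ne',
    log_le_log_iff (mul_pos (hΓ hax) (hΓ hy)) (mul_pos (hΓ le_rfl) (hΓ (hax.trans hxb)))] at hlog

theorem stmt7 (α : ℝ) (hα : α ∈ Set.Icc (0:ℝ) 2) :
    (90 + 19 * α) * 2 / (α + 9) ≤
      (90 + 19 * α) * Real.Gamma (α / 2 + 2) * Real.Gamma (α + 9 / 2) /
        (Real.Gamma (α / 2 + 11 / 2) * Real.Gamma (α + 2)) := by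
  obtain ⟨hα0, -⟩ := hα
  have hΓ : Gamma (α + 2) * Gamma (α / 2 + 9 / 2) ≤ Gamma (α / 2 + 2) * Gamma (α + 9 / 2) :=
    Gamma_mul_Gamma_le_of_add_eq (by positivity) (by linarith) (by linarith) (by ring)
  have hpos : 0 < Gamma (α + 2) * Gamma (α / 2 + 9 / 2) :=
    mul_pos (Gamma_pos_of_pos (by positivity)) (Gamma_pos_of_pos (by positivity))
  have hsplit : (90 + 19 * α) * Gamma (α / 2 + 2) * Gamma (α + 9 / 2) /
      (Gamma (α / 2 + 11 / 2) * Gamma (α + 2)) = (90 + 19 * α) * 2 / (α + 9) *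
        (Gamma (α / 2 + 2) * Gamma (α + 9 / 2) / (Gamma (α + 2) * Gamma (α / 2 + 9 / 2))) := by
    rw [show α / 2 + 11 / 2 = α / 2 + 9 / 2 + 1 by ring, Gamma_add_one (by positivity)]
    field_simp
  rw [hsplit]
  exact le_mul_of_one_le_right (by positivity) ((one_le_div hpos).2 hΓ)
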